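/- Let X be a cycle set and φ a λ-endomorphism of the permutation brace G(X) (an additive endomorphism commuting with all λ_g, g ∈ G(X)). Then the permutation group of the φ-cabled cycle set X_φ equals φ(G(X)): the multiplicative subgroup generated by {φ(λ_x) : x ∈ X} coincides with the additive image φ(G(X)), and this is a left ideal of G(X). -/

import Mathlib

/-!
In a brace, an additive subgroup stable under every `λ_g` is automatically a subgroup of the
multiplicative group, and conversely a `λ`-stable multiplicative subgroup is additive, because
`a ∘ b = a + λ_a b` and `a + b = a ∘ λ_{a⁻¹} b`. The image of `φ` is such a left ideal, since `φ`
commutes with every `λ_g`; so it contains the multiplicative subgroup generated by the `φ(λ_x)`.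
This subgroup is in turn `λ`-stable, because the generators are permuted by the `λ_g`
(`λ_g φ(λ_x) = φ(λ_{g x})`), hence it is additive and contains `φ(G) = ⟨φ(λ_x)⟩₊`.
-/

def IsBrace (G : Type*) [AddCommGroup G] [Group G] : Prop :=
  ∀ a b c : G, a * (b + c) = a * b - a + a * c

section Brace

variable {G : Type*} [AddCommGroup G] [Group G]

def braceLambda (g a : G) : G := g * a - g

def IsLambdaStable (I : Set G) : Prop := ∀ g, ∀ a ∈ I, braceLambda g a ∈ I

theorem mul_eq_add_braceLambda (a b : G) : a * b = a + braceLambda a b := by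
  rw [braceLambda]; abel

namespace IsBrace

theorem braceLambda_add (hG : IsBrace G) (g a b : G) :
    braceLambda g (a + b) = braceLambda g a + braceLambda g b := by
  simp only [braceLambda, hG g a b]; abel

theorem mul_zero (hG : IsBrace G) (a : G) : a * 0 = a := by
  have h := hG.braceLambda_add a 0 0
  rw [add_zero, left_eq_add, braceLambda, sub_eq_zero] at h
  exact h

theorem one_eq_zero (hG : IsBrace G) : (1 : G) = 0 := by
  simpa using (hG.mul_zero 1).symm

theorem braceLambda_one_left (hG : IsBrace G) (a : G) : braceLambda 1 a = a := by
  rw [braceLambda, one_mul, hG.one_eq_zero, sub_zero]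

theorem braceLambda_one_right (hG : IsBrace G) (g : G) : braceLambda g 1 = 1 := by
  rw [braceLambda, mul_one, sub_self, hG.one_eq_zero]

def braceLambdaHom (hG : IsBrace G) (g : G) : G →+ G :=
  AddMonoidHom.mk' (braceLambda g) (hG.braceLambda_add g)

theorem braceLambda_mul_left (hG : IsBrace G) (g h a : G) :
    braceLambda (g * h) a = braceLambda g (braceLambda h a) := by
  calc braceLambda (g * h) a = braceLambda g (h * a) - braceLambda g h := by
        simp only [braceLambda, mul_assoc]; abel
    _ = braceLambda g (braceLambda h a) := (map_sub (hG.braceLambdaHom g) (h * a) h).symm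

theorem add_eq_mul_braceLambda_inv (hG : IsBrace G) (a b : G) :
    a + b = a * braceLambda a⁻¹ b := by
  rw [mul_eq_add_braceLambda, ← hG.braceLambda_mul_left, mul_inv_cancel,
    hG.braceLambda_one_left]

theorem inv_eq_neg_braceLambda (hG : IsBrace G) (a : G) : a⁻¹ = -braceLambda a⁻¹ a := by
  have h := mul_eq_add_braceLambda a⁻¹ a
  rw [inv_mul_cancel, hG.one_eq_zero] at h
  exact eq_neg_of_add_eq_zero_left h.symm

theorem neg_eq_braceLambda_inv (hG : IsBrace G) (a : G) : -a = braceLambda a a⁻¹ := by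
  rw [braceLambda, mul_inv_cancel, hG.one_eq_zero, zero_sub]

theorem braceLambda_mul_right (hG : IsBrace G) (g b c : G) :
    braceLambda g (b * c) =
      braceLambda g b * braceLambda ((braceLambda g b)⁻¹ * (g * b)) c := by
  rw [hG.braceLambda_mul_left, ← hG.add_eq_mul_braceLambda_inv, mul_eq_add_braceLambda b c,
    hG.braceLambda_add, ← hG.braceLambda_mul_left]

theorem braceLambda_inv_right (hG : IsBrace G) (g b : G) :
    braceLambda g b⁻¹ =
      (braceLambda ((braceLambda g b⁻¹)⁻¹ * (g * b⁻¹)) b)⁻¹ := by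
  have h := hG.braceLambda_mul_right g b⁻¹ b
  rw [inv_mul_cancel, hG.braceLambda_one_right] at h
  exact eq_inv_of_mul_eq_one_left h.symm

theorem isLambdaStable_closure (hG : IsBrace G) {S : Set G} (hS : IsLambdaStable S) :
    IsLambdaStable (Subgroup.closure S : Set G) := by
  intro g b hb
  induction hb using Subgroup.closure_induction generalizing g with
  | mem b hb => exact Subgroup.subset_closure (hS g b hb)
  | one => rw [hG.braceLambda_one_right]; exact Subgroup.one_mem _
  | mul b c _ _ ihb ihc =>
    rw [hG.braceLambda_mul_right]
    exact Subgroup.mul_mem _ (ihb g) (ihc _)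
  | inv b _ ihb =>
    rw [hG.braceLambda_inv_right]
    exact Subgroup.inv_mem _ (ihb _)

def subgroupOfIsLambdaStable (hG : IsBrace G) (I : AddSubgroup G)
    (hI : IsLambdaStable (I : Set G)) : Subgroup G where
  carrier := I
  one_mem' := by rw [hG.one_eq_zero]; exact I.zero_mem
  mul_mem' {a b} ha hb := by
    rw [mul_eq_add_braceLambda]
    exact I.add_mem ha (hI a b hb)
  inv_mem' {a} ha := by
    rw [hG.inv_eq_neg_braceLambda]
    exact I.neg_mem (hI a⁻¹ a ha)

def addSubgroupOfIsLambdaStable (hG : IsBrace G) (H : Subgroup G)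
    (hH : IsLambdaStable (H : Set G)) : AddSubgroup G where
  carrier := H
  zero_mem' := by rw [← hG.one_eq_zero]; exact H.one_mem
  add_mem' {a b} ha hb := by
    rw [hG.add_eq_mul_braceLambda_inv]
    exact H.mul_mem ha (hH a⁻¹ b hb)
  neg_mem' {a} ha := by
    rw [hG.neg_eq_braceLambda_inv]
    exact hH a a⁻¹ (H.inv_mem ha)

end IsBrace

end Brace

theorem permutation_group_of_endocabled_cycle_set_general
    {X G : Type*} [AddCommGroup G] [Group G]
    (hbrace : ∀ a b c : G, a * (b + c) = a * b - a + a * c)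
    (act : G →* Equiv.Perm X)
    (lam : X → G)
    (hfund : ∀ (g : G) (x : X), lam (act g x) = g * lam x - g)
    (hgen : AddSubgroup.closure (Set.range lam) = ⊤)
    (φ : G →+ G)
    (hφ : ∀ g h : G, g * φ h - g = φ (g * h - g)) :
    ((Subgroup.closure (Set.range fun x : X => φ (lam x)) : Subgroup G) : Set G)
        = Set.range φ ∧
    ∀ g : G, ∀ a ∈ Set.range φ, g * a - g ∈ Set.range φ := by
  have hG : IsBrace G := hbrace
  set S := Set.range fun x : X => φ (lam x)
  have hS : IsLambdaStable S := by
    rintro g _ ⟨x, rfl⟩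
    refine ⟨act g x, ?_⟩
    show φ (lam (act g x)) = braceLambda g (φ (lam x))
    rw [hfund]
    exact (hφ g (lam x)).symm
  have hrange : IsLambdaStable (Set.range φ) := by
    rintro g _ ⟨h, rfl⟩
    exact ⟨g * h - g, (hφ g h).symm⟩
  have hrange_eq : φ.range = AddSubgroup.closure S := by
    rw [AddMonoidHom.range_eq_map, ← hgen, AddMonoidHom.map_closure, ← Set.range_comp]
    rfl
  refine ⟨Set.Subset.antisymm ?_ ?_, hrange⟩
  · exact (Subgroup.closure_le (hG.subgroupOfIsLambdaStable φ.range hrange)).2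
      (Set.range_subset_iff.2 fun x => ⟨lam x, rfl⟩)
  · rw [← AddMonoidHom.coe_range, hrange_eq]
    exact (AddSubgroup.closure_le
      (hG.addSubgroupOfIsLambdaStable _ (hG.isLambdaStable_closure hS))).2 Subgroup.subset_closure

/-- the permutation group of the φ-cabled cycle set equals `φ(G(X))`:
the multiplicative subgroup generated by `{φ(λ_x) : x ∈ X}` coincides with the image
of `φ`, and this image is a left ideal of the permutation brace. -/
theorem permutation_group_of_endocabled_cycle_set
    {X G : Type*} [Finite X] [AddCommGroup G] [Group G]
    (op : X → X → X)
    (hbij : ∀ x : X, Function.Bijective (op x))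
    (hcy : ∀ x y z : X, op (op x y) (op x z) = op (op y x) (op y z))
    (hbrace : ∀ a b c : G, a * (b + c) = a * b - a + a * c)
    (act : G →* Equiv.Perm X) (hinj : Function.Injective act)
    (lam : X → G)
    (hlam : ∀ x y : X, act (lam x) (op x y) = y)
    (hfund : ∀ (g : G) (x : X), lam (act g x) = g * lam x - g)
    (hgen : AddSubgroup.closure (Set.range lam) = ⊤)
    (φ : G →+ G)
    (hφ : ∀ g h : G, g * φ h - g = φ (g * h - g)) :
    ((Subgroup.closure (Set.range fun x : X => φ (lam x)) : Subgroup G) : Set G)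
        = Set.range φ ∧
    ∀ g : G, ∀ a ∈ Set.range φ, g * a - g ∈ Set.range φ :=
  permutation_group_of_endocabled_cycle_set_general hbrace act lam hfund hgen φ hφ
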